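/- arXiv:2207.08258 — 2 statements merged into one kernel-verified Lean document; each statement's English description precedes it below -/
import Mathlib

section
/- For the James-Stein shift γ(x) = −(d−2)x/‖x‖² on ℝ^d \ {0}, one has ‖γ(x)‖² + 2∇·γ(x) = −(d−2)²/‖x‖², which is strictly negative for d > 2 and all x ≠ 0. -/
/-!
Writing `c = -(d - 2)` and `r = ‖x‖`, the Jacobian of `γ` at `x` is `(c / r²) (I - 2 x xᵀ / r²)`,
whose trace is `c (d - 2) / r²`, while `‖γ x‖² = c² / r²`. Hence
`‖γ x‖² + 2 ∇·γ(x) = (c² + 2 c (d - 2)) / r² = -(d - 2)² / r²`.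
-/

theorem hasFDerivAt_div_norm_sq_smul {E : Type*} [NormedAddCommGroup E] [InnerProductSpace ℝ E]
    (c : ℝ) {x : E} (hx : x ≠ 0) :
    HasFDerivAt (fun y => (c / ‖y‖ ^ 2) • y)
      ((c / ‖x‖ ^ 2) • ContinuousLinearMap.id ℝ E
        - (2 * c / ‖x‖ ^ 4) • (innerSL ℝ x).smulRight x) x := by
  have hx2 : ‖x‖ ^ 2 ≠ 0 := by positivity
  have hscalar : HasFDerivAt (fun y : E => c / ‖y‖ ^ 2) (-(2 * c / ‖x‖ ^ 4) • innerSL ℝ x) x := by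
    refine (((hasFDerivAt_inv hx2).comp x
      (hasStrictFDerivAt_norm_sq x).hasFDerivAt).const_mul c).congr_fderiv ?_
    ext v
    simp only [ContinuousLinearMap.comp_smul, smul_apply, ContinuousLinearMap.comp_apply,
      coe_innerSL_apply, ContinuousLinearMap.toSpanSingleton_apply, smul_eq_mul, mul_neg,
      smul_neg, nsmul_eq_mul, Nat.cast_ofNat, neg_smul, neg_apply, neg_inj]
    ring
  refine (hscalar.smul (hasFDerivAt_id x)).congr_fderiv ?_
  ext v
  simp [sub_eq_add_neg, mul_smul]

section Divergence

variable {ι : Type*} [Fintype ι] [DecidableEq ι]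

noncomputable def divergence (F : EuclideanSpace ℝ ι → EuclideanSpace ℝ ι)
    (x : EuclideanSpace ℝ ι) : ℝ :=
  ∑ i, fderiv ℝ (fun y => F y i) x (EuclideanSpace.single i 1)

theorem HasFDerivAt.divergence_eq {F : EuclideanSpace ℝ ι → EuclideanSpace ℝ ι}
    {F' : EuclideanSpace ℝ ι →L[ℝ] EuclideanSpace ℝ ι} {x : EuclideanSpace ℝ ι}
    (h : HasFDerivAt F F' x) :
    divergence F x = ∑ i, F' (EuclideanSpace.single i 1) i := by
  refine Finset.sum_congr rfl fun i _ => ?_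
  have hi : HasFDerivAt (fun y => F y i) ((EuclideanSpace.proj (𝕜 := ℝ) i).comp F') x :=
    (EuclideanSpace.proj (𝕜 := ℝ) i).hasFDerivAt.comp x h
  rw [hi.fderiv]
  rfl

theorem divergence_div_norm_sq_smul (c : ℝ) {x : EuclideanSpace ℝ ι} (hx : x ≠ 0) :
    divergence (fun y => (c / ‖y‖ ^ 2) • y) x = c * (Fintype.card ι - 2) / ‖x‖ ^ 2 := by
  have hx2 : ‖x‖ ^ 2 ≠ 0 := by positivity
  rw [(hasFDerivAt_div_norm_sq_smul c hx).divergence_eq]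
  simp only [sub_apply, smul_apply, ContinuousLinearMap.id_apply,
    ContinuousLinearMap.smulRight_apply, coe_innerSL_apply, EuclideanSpace.inner_single_right,
    PiLp.sub_apply, PiLp.smul_apply, PiLp.single_eq_same, smul_eq_mul, one_mul, mul_one,
    conj_trivial, Finset.sum_sub_distrib, Finset.sum_const, Finset.card_univ, nsmul_eq_mul,
    ← Finset.mul_sum]
  have hsum : ∑ i, x i * x i = ‖x‖ ^ 2 := by
    rw [EuclideanSpace.real_norm_sq_eq]
    simp only [sq]
  rw [hsum]
  field_simp

end Divergence

theorem norm_div_norm_sq_smul_sq {E : Type*} [SeminormedAddCommGroup E] [NormedSpace ℝ E]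
    (c : ℝ) (x : E) : ‖(c / ‖x‖ ^ 2) • x‖ ^ 2 = c ^ 2 / ‖x‖ ^ 2 := by
  rcases eq_or_ne ‖x‖ 0 with h | h
  · simp [h]
  · rw [norm_smul, mul_pow, Real.norm_eq_abs, sq_abs]
    field_simp

/-- For the James-Stein shift `γ(x) = −(d−2)x/‖x‖²` on `ℝ^d \ {0}`,
`‖γ(x)‖² + 2∇·γ(x) = −(d−2)²/‖x‖²`, strictly negative for `d > 2` and all `x ≠ 0`. -/
theorem stmt_4 (d : ℕ) (x : EuclideanSpace ℝ (Fin d)) (hx : x ≠ 0)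
    (γ : EuclideanSpace ℝ (Fin d) → EuclideanSpace ℝ (Fin d))
    (hγ : ∀ y, γ y = (-((d : ℝ) - 2) / ‖y‖ ^ 2) • y) :
    ‖γ x‖ ^ 2 +
        2 * ∑ i, fderiv ℝ (fun y => γ y i) x (EuclideanSpace.single i 1)
      = -((d : ℝ) - 2) ^ 2 / ‖x‖ ^ 2 ∧
    (2 < d →
      ‖γ x‖ ^ 2 +
          2 * ∑ i, fderiv ℝ (fun y => γ y i) x (EuclideanSpace.single i 1) < 0) := by
  obtain rfl : γ = fun y => (-((d : ℝ) - 2) / ‖y‖ ^ 2) • y := funext hγ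
  have key : ‖(-((d : ℝ) - 2) / ‖x‖ ^ 2) • x‖ ^ 2
      + 2 * divergence (fun y => (-((d : ℝ) - 2) / ‖y‖ ^ 2) • y) x
      = -((d : ℝ) - 2) ^ 2 / ‖x‖ ^ 2 := by
    rw [norm_div_norm_sq_smul_sq, divergence_div_norm_sq_smul _ hx, Fintype.card_fin]
    ring
  rw [divergence] at key
  refine ⟨key, fun hd => key ▸ div_neg_of_neg_of_pos ?_ (pow_pos (norm_pos_iff.mpr hx) 2)⟩
  have hd' : (0 : ℝ) < d - 2 := sub_pos.mpr (by exact_mod_cast hd)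
  exact neg_neg_of_pos (pow_pos hd' 2)
end

section
/- Let m : ℝ^d → (0, ∞) be twice continuously differentiable. Then −‖∇ log m(x)‖² + 2·Δm(x)/m(x) = 4·Δ√m(x)/√m(x) for all x ∈ ℝ^d. -/
/-! The chain rule for the Laplacian, `Δ(φ ∘ m) = φ'(m) Δm + φ''(m) ‖∇m‖²`, applied to `φ = √·`
together with `∇ log m = ∇m / m`, turns both sides into `2 Δm / m - ‖∇m‖² / m²`. -/

/-- The Laplacian `Δf(x) = Σᵢ ∂²f/∂xᵢ²` on `ℝ^d`. -/
noncomputable def lap {d : ℕ} (f : EuclideanSpace ℝ (Fin d) → ℝ)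
    (x : EuclideanSpace ℝ (Fin d)) : ℝ :=
  ∑ i, iteratedFDeriv ℝ 2 f x ![EuclideanSpace.single i 1, EuclideanSpace.single i 1]

section

open EuclideanSpace

variable {d : ℕ}

lemma lap_eq_sum_fderiv_fderiv (f : EuclideanSpace ℝ (Fin d) → ℝ) (x : EuclideanSpace ℝ (Fin d)) :
    lap f x = ∑ i, fderiv ℝ (fderiv ℝ f) x (single i 1) (single i 1) := by
  simp only [lap, iteratedFDeriv_two_apply, Matrix.cons_val_zero, Matrix.cons_val_one]

lemma gradient_apply_eq_fderiv (f : EuclideanSpace ℝ (Fin d) → ℝ) (x : EuclideanSpace ℝ (Fin d))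
    (i : Fin d) : gradient f x i = fderiv ℝ f x (single i 1) := by
  rw [← inner_gradient_left, EuclideanSpace.inner_single_right]
  simp

lemma norm_gradient_sq_eq_sum (f : EuclideanSpace ℝ (Fin d) → ℝ) (x : EuclideanSpace ℝ (Fin d)) :
    ‖gradient f x‖ ^ 2 = ∑ i, fderiv ℝ f x (single i 1) ^ 2 := by
  simp only [EuclideanSpace.real_norm_sq_eq, gradient_apply_eq_fderiv]

lemma gradient_comp_of_hasDerivAt {φ : ℝ → ℝ} {φ' : ℝ} {f : EuclideanSpace ℝ (Fin d) → ℝ}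
    {x : EuclideanSpace ℝ (Fin d)} (hφ : HasDerivAt φ φ' (f x)) (hf : DifferentiableAt ℝ f x) :
    gradient (φ ∘ f) x = φ' • gradient f x := by
  simp [gradient, (hφ.comp_hasFDerivAt x hf.hasFDerivAt).fderiv]

lemma lap_comp_of_hasDerivAt {φ φ' : ℝ → ℝ} {φ'' : ℝ} {f : EuclideanSpace ℝ (Fin d) → ℝ}
    {x : EuclideanSpace ℝ (Fin d)} (hφ : ∀ y, HasDerivAt φ (φ' (f y)) (f y))
    (hφ' : HasDerivAt φ' φ'' (f x)) (hf : Differentiable ℝ f)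
    (hf' : DifferentiableAt ℝ (fderiv ℝ f) x) :
    lap (φ ∘ f) x = φ' (f x) * lap f x + φ'' * ‖gradient f x‖ ^ 2 := by
  have hD : fderiv ℝ (φ ∘ f) = (φ' ∘ f) • fderiv ℝ f :=
    funext fun y => ((hφ y).comp_hasFDerivAt y (hf y).hasFDerivAt).fderiv
  have hD2 := ((hφ'.comp_hasFDerivAt x (hf x).hasFDerivAt).smul hf'.hasFDerivAt).fderiv
  rw [← hD] at hD2
  simp only [lap_eq_sum_fderiv_fderiv, norm_gradient_sq_eq_sum, hD2, Finset.mul_sum,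
    ← Finset.sum_add_distrib]
  refine Finset.sum_congr rfl fun i _ => ?_
  simp only [Function.comp_apply, add_apply, smul_apply, ContinuousLinearMap.smulRight_apply,
    smul_eq_mul]
  ring

lemma hasDerivAt_one_div_two_mul_sqrt {t : ℝ} (ht : 0 < t) :
    HasDerivAt (fun s => 1 / (2 * √s)) (-1 / (4 * t * √t)) t := by
  have hs : √t ≠ 0 := (Real.sqrt_pos.2 ht).ne'
  refine ((hasDerivAt_const t 1).div ((Real.hasDerivAt_sqrt ht.ne').const_mul 2)
    (by positivity)).congr_deriv ?_
  rw [mul_pow, Real.sq_sqrt ht.le]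
  field_simp
  ring

end

/-- For a strictly positive `C²` function `m : ℝ^d → (0,∞)`,
`−‖∇ log m(x)‖² + 2 Δm(x)/m(x) = 4 Δ√m(x)/√m(x)` for all `x`. -/
theorem stmt_7 (d : ℕ) (m : EuclideanSpace ℝ (Fin d) → ℝ)
    (hm : ContDiff ℝ 2 m) (hpos : ∀ x, 0 < m x) :
    ∀ x, -‖gradient (fun y => Real.log (m y)) x‖ ^ 2 + 2 * lap m x / m x
      = 4 * lap (fun y => Real.sqrt (m y)) x / Real.sqrt (m x) := by
  intro x
  have hm₁ : Differentiable ℝ m := hm.differentiable (by norm_num)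
  have hm₂ : DifferentiableAt ℝ (fderiv ℝ m) x :=
    (hm.fderiv_right (m := 1) le_rfl).differentiable (by norm_num) x
  have hlog : gradient (fun y => Real.log (m y)) x = (m x)⁻¹ • gradient m x :=
    gradient_comp_of_hasDerivAt (Real.hasDerivAt_log (hpos x).ne') (hm₁ x)
  have hsqrt : lap (fun y => √(m y)) x
      = 1 / (2 * √(m x)) * lap m x + -1 / (4 * m x * √(m x)) * ‖gradient m x‖ ^ 2 :=
    lap_comp_of_hasDerivAt (fun y => Real.hasDerivAt_sqrt (hpos y).ne')
      (hasDerivAt_one_div_two_mul_sqrt (hpos x)) hm₁ hm₂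
  rw [hlog, hsqrt, norm_smul, Real.norm_of_nonneg (inv_nonneg.2 (hpos x).le)]
  have hs : √(m x) ≠ 0 := (Real.sqrt_pos.2 (hpos x)).ne'
  have hms : m x = √(m x) ^ 2 := (Real.sq_sqrt (hpos x).le).symm
  set s := √(m x)
  rw [hms]
  field_simp
  ring
end
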